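/- Let Y_1, Y_2, … be mutually independent real-valued random variables, S_k = Y_1 + ⋯ + Y_k, and suppose there is an integer l ≥ 1 such that for all n ≥ 1 the random variables Y_{n+l} and Y_n are identically distributed. If h ≥ 0 satisfies E[e^{h S_l}] ≤ 1, then sup_{k≥1} E[e^{h S_k}] = max_{1≤k≤l} E[e^{h S_k}], and consequently for every u > 0: P[sup_{k≥1} S_k > u] ≤ e^{−hu} · max_{1≤k≤l} E[e^{h S_k}]. -/

import Mathlib

/-!
Write `f j = E[e^{h Y_j}]` and `a k = E[e^{h S_k}]`. Independence gives `a k = ∏_{j<k} f j`, and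
the periodicity of `f` turns this into `a (k + l) = a k * a l ≤ a k`, so the supremum of `a` is
attained at some `k ≤ l`.

For the tail bound, split `{sup_k S_k > u}` according to the first index `k` with `S_k > u`.
That event `C` is determined by `Y_j`, `j < k`, so for `N ≥ k` the future increments factor out:
`E[e^{h S_N}; C] = E[e^{h S_k}; C] · a N / a k ≥ e^{hu} P(C) · a N / sup a`
(this is the martingale property of `e^{h S_k} / a k`). Summing over `k ≤ N` and cancelling `a N`
gives `P(max_{k ≤ N} S_k > u) ≤ e^{-hu} sup a`.
-/

open MeasureTheory ProbabilityTheory Finset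
open scoped ENNReal

theorem Function.Periodic.prod_range_add {M : Type*} [CommMonoid M] {f : ℕ → M} {l : ℕ}
    (hf : Function.Periodic f l) (k : ℕ) :
    ∏ j ∈ range (k + l), f j = (∏ j ∈ range k, f j) * ∏ j ∈ range l, f j := by
  induction k with
  | zero => simp
  | succ k ih =>
    rw [Nat.add_right_comm, prod_range_succ, ih, hf, prod_range_succ, mul_right_comm]

theorem Function.Periodic.ne_top_of_prod_range_ne_top {f : ℕ → ℝ≥0∞} {l : ℕ}
    (hf : Function.Periodic f l) (hl : 1 ≤ l) (h0 : ∀ j, f j ≠ 0)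
    (htop : ∏ j ∈ range l, f j ≠ ∞) (j : ℕ) : f j ≠ ∞ := by
  rw [← hf.map_mod_nat]
  exact fun hj => htop (WithTop.prod_eq_top (mem_range.2 (Nat.mod_lt j hl)) hj fun i _ => h0 i)

section ShiftLE

variable {α : Type*} [CompleteLattice α] {a : ℕ → α} {l : ℕ}

theorem le_iSup_Icc_of_add_le (hl : 1 ≤ l) (ha : ∀ k, a (k + l) ≤ a k) {k : ℕ} (hk : 1 ≤ k) :
    a k ≤ ⨆ j ∈ Icc 1 l, a j := by
  induction k using Nat.strong_induction_on with
  | _ k ih =>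
    by_cases hkl : k ≤ l
    · exact le_iSup₂ (f := fun j (_ : j ∈ Icc 1 l) => a j) k (mem_Icc.2 ⟨hk, hkl⟩)
    · obtain ⟨m, rfl⟩ := Nat.exists_eq_add_of_le' (not_le.1 hkl).le
      exact (ha m).trans (ih m (by omega) (by omega))

theorem iSup_add_one_eq_iSup_Icc_of_add_le (hl : 1 ≤ l) (ha : ∀ k, a (k + l) ≤ a k) :
    ⨆ k, a (k + 1) = ⨆ k ∈ Icc 1 l, a k := by
  refine le_antisymm (iSup_le fun k => le_iSup_Icc_of_add_le hl ha k.succ_pos) (iSup₂_le ?_)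
  intro k hk
  obtain ⟨j, rfl⟩ := Nat.exists_eq_add_of_le' (mem_Icc.1 hk).1
  exact le_iSup (fun j => a (j + 1)) j

end ShiftLE

theorem lintegral_mul_eq_of_measurable_iSup_comap {Ω ι β : Type*} [MeasurableSpace Ω]
    [MeasurableSpace β] {P : Measure Ω} {Y : ι → Ω → β} (hmeas : ∀ i, Measurable (Y i))
    (hindep : iIndepFun Y P) {s t : Set ι} (hst : Disjoint s t) {F G : Ω → ℝ≥0∞}
    (hF : Measurable[⨆ i ∈ s, MeasurableSpace.comap (Y i) inferInstance] F)
    (hG : Measurable[⨆ i ∈ t, MeasurableSpace.comap (Y i) inferInstance] G) :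
    ∫⁻ ω, F ω * G ω ∂P = (∫⁻ ω, F ω ∂P) * ∫⁻ ω, G ω ∂P :=
  have hle : ∀ i, MeasurableSpace.comap (Y i) inferInstance ≤ ‹MeasurableSpace Ω› :=
    fun i => (hmeas i).comap_le
  lintegral_mul_eq_lintegral_mul_lintegral_of_independent_measurableSpace
    (iSup₂_le fun i _ => hle i) (iSup₂_le fun i _ => hle i)
    (indep_iSup_of_disjoint hle hindep hst) hF hG

theorem measurable_sum_range_of_le {Ω : Type*} {Y : ℕ → Ω → ℝ} {n m : ℕ} (hnm : n ≤ m) :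
    Measurable[⨆ i ∈ Set.Iio m, MeasurableSpace.comap (Y i) inferInstance]
      (fun ω => ∑ j ∈ range n, Y j ω) :=
  Finset.measurable_sum _ fun j hj => Measurable.of_comap_le <|
    le_iSup₂ (f := fun i (_ : i ∈ Set.Iio m) => MeasurableSpace.comap (Y i) inferInstance) j
      ((mem_range.1 hj).trans_le hnm)

theorem measurableSet_disjointed_lt_sum_range {Ω : Type*} {Y : ℕ → Ω → ℝ} (u : ℝ) (k : ℕ) :
    MeasurableSet[⨆ i ∈ Set.Iio (k + 1), MeasurableSpace.comap (Y i) inferInstance]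
      (disjointed (fun k => {ω | u < ∑ j ∈ range (k + 1), Y j ω}) k) := by
  have hE : ∀ j ≤ k,
      MeasurableSet[⨆ i ∈ Set.Iio (k + 1), MeasurableSpace.comap (Y i) inferInstance]
        {ω | u < ∑ i ∈ range (j + 1), Y i ω} := fun j hj =>
    measurableSet_lt measurable_const (measurable_sum_range_of_le (by omega))
  rw [disjointed_eq_inter_compl]
  exact (hE k le_rfl).inter <| .iInter fun j => .iInter fun hj => (hE j (by omega)).compl

section ExpMoment

variable {Ω : Type*} [MeasurableSpace Ω] {P : Measure Ω} {h : ℝ}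

theorem ofReal_exp_mul_sum {ι : Type*} (s : Finset ι) (x : ι → ℝ) :
    ENNReal.ofReal (Real.exp (h * ∑ j ∈ s, x j)) =
      ∏ j ∈ s, ENNReal.ofReal (Real.exp (h * x j)) := by
  rw [mul_sum, Real.exp_sum, ENNReal.ofReal_prod_of_nonneg fun j _ => (Real.exp_pos _).le]

theorem lintegral_ofReal_exp_mul_sum {ι : Type*} {Y : ι → Ω → ℝ}
    (hmeas : ∀ i, Measurable (Y i)) (hindep : iIndepFun Y P) (s : Finset ι) :
    ∫⁻ ω, ENNReal.ofReal (Real.exp (h * ∑ j ∈ s, Y j ω)) ∂P =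
      ∏ j ∈ s, ∫⁻ ω, ENNReal.ofReal (Real.exp (h * Y j ω)) ∂P := by
  simp_rw [ofReal_exp_mul_sum]
  exact lintegral_prod_eq_prod_lintegral_of_indepFun s _
    (hindep.comp (fun _ x => ENNReal.ofReal (Real.exp (h * x))) fun _ => by fun_prop)
    fun j => by fun_prop

theorem lintegral_ofReal_exp_ne_zero [NeZero P] {X : Ω → ℝ} (hX : Measurable X) :
    ∫⁻ ω, ENNReal.ofReal (Real.exp (X ω)) ∂P ≠ 0 := by
  rw [Ne, lintegral_eq_zero_iff (by fun_prop)]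
  simpa [Filter.EventuallyEq, Real.exp_pos] using NeZero.ne P

variable {Y : ℕ → Ω → ℝ}

theorem setLIntegral_ofReal_exp_mul_sum_range (hmeas : ∀ i, Measurable (Y i))
    (hindep : iIndepFun Y P) {m N : ℕ} (hmN : m ≤ N) {C : Set Ω}
    (hC : MeasurableSet[⨆ i ∈ Set.Iio m, MeasurableSpace.comap (Y i) inferInstance] C) :
    ∫⁻ ω in C, ENNReal.ofReal (Real.exp (h * ∑ j ∈ range N, Y j ω)) ∂P =
      (∫⁻ ω in C, ENNReal.ofReal (Real.exp (h * ∑ j ∈ range m, Y j ω)) ∂P) *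
        ∏ j ∈ Ico m N, ∫⁻ ω, ENNReal.ofReal (Real.exp (h * Y j ω)) ∂P := by
  have hsplit (ω : Ω) : ENNReal.ofReal (Real.exp (h * ∑ j ∈ range N, Y j ω)) =
      ENNReal.ofReal (Real.exp (h * ∑ j ∈ range m, Y j ω)) *
        ENNReal.ofReal (Real.exp (h * ∑ j ∈ Ico m N, Y j ω)) := by
    rw [← sum_range_add_sum_Ico _ hmN, mul_add, Real.exp_add,
      ENNReal.ofReal_mul (Real.exp_pos _).le]
  have hexp : Measurable fun x : ℝ => ENNReal.ofReal (Real.exp (h * x)) := by fun_prop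
  have hpast : Measurable[⨆ i ∈ Set.Iio m, MeasurableSpace.comap (Y i) inferInstance]
      (C.indicator fun ω => ENNReal.ofReal (Real.exp (h * ∑ j ∈ range m, Y j ω))) :=
    (hexp.comp (measurable_sum_range_of_le le_rfl)).indicator hC
  have hfuture : Measurable[⨆ i ∈ Set.Ici m, MeasurableSpace.comap (Y i) inferInstance]
      fun ω => ENNReal.ofReal (Real.exp (h * ∑ j ∈ Ico m N, Y j ω)) :=
    hexp.comp <| Finset.measurable_sum _ fun j hj => Measurable.of_comap_le <|
      le_iSup₂ (f := fun i (_ : i ∈ Set.Ici m) => MeasurableSpace.comap (Y i) inferInstance) j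
        (mem_Ico.1 hj).1
  rw [← lintegral_indicator (iSup₂_le (fun i _ => (hmeas i).comap_le) _ hC),
    ← lintegral_indicator (iSup₂_le (fun i _ => (hmeas i).comap_le) _ hC)]
  simp_rw [hsplit, Set.indicator_mul_left]
  rw [lintegral_mul_eq_of_measurable_iSup_comap hmeas hindep (Set.Iio_disjoint_Ici (le_refl m))
    hpast hfuture, lintegral_ofReal_exp_mul_sum hmeas hindep]

end ExpMoment

section Maximal

variable {Ω : Type*} [MeasurableSpace Ω] {P : Measure Ω} {h : ℝ} {Y : ℕ → Ω → ℝ}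

theorem ofReal_exp_mul_measure_mul_lintegral_le (hmeas : ∀ i, Measurable (Y i))
    (hindep : iIndepFun Y P) (hh : 0 ≤ h) {u : ℝ} {m N : ℕ} (hmN : m ≤ N) {C : Set Ω}
    (hC : MeasurableSet[⨆ i ∈ Set.Iio m, MeasurableSpace.comap (Y i) inferInstance] C)
    (hCu : C ⊆ {ω | u < ∑ j ∈ range m, Y j ω}) :
    ENNReal.ofReal (Real.exp (h * u)) * P C *
        ∫⁻ ω, ENNReal.ofReal (Real.exp (h * ∑ j ∈ range N, Y j ω)) ∂P ≤
      (∫⁻ ω, ENNReal.ofReal (Real.exp (h * ∑ j ∈ range m, Y j ω)) ∂P) *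
        ∫⁻ ω in C, ENNReal.ofReal (Real.exp (h * ∑ j ∈ range N, Y j ω)) ∂P := by
  have hmarkov : ENNReal.ofReal (Real.exp (h * u)) * P C ≤
      ∫⁻ ω in C, ENNReal.ofReal (Real.exp (h * ∑ j ∈ range m, Y j ω)) ∂P := by
    rw [← setLIntegral_const]
    refine setLIntegral_mono (by fun_prop) fun ω hω => ?_
    gcongr
    exact (hCu hω).le
  rw [setLIntegral_ofReal_exp_mul_sum_range hmeas hindep hmN hC,
    lintegral_ofReal_exp_mul_sum hmeas hindep, lintegral_ofReal_exp_mul_sum hmeas hindep,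
    ← prod_range_mul_prod_Ico _ hmN]
  calc _ = ENNReal.ofReal (Real.exp (h * u)) * P C *
          (∏ j ∈ Ico m N, ∫⁻ ω, ENNReal.ofReal (Real.exp (h * Y j ω)) ∂P) *
            ∏ j ∈ range m, ∫⁻ ω, ENNReal.ofReal (Real.exp (h * Y j ω)) ∂P := by ring
    _ ≤ (∫⁻ ω in C, ENNReal.ofReal (Real.exp (h * ∑ j ∈ range m, Y j ω)) ∂P) *
          (∏ j ∈ Ico m N, ∫⁻ ω, ENNReal.ofReal (Real.exp (h * Y j ω)) ∂P) *
            ∏ j ∈ range m, ∫⁻ ω, ENNReal.ofReal (Real.exp (h * Y j ω)) ∂P := by gcongr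
    _ = _ := by ring

theorem sum_measure_disjointed_lt_sum_range_le [IsProbabilityMeasure P]
    (hmeas : ∀ i, Measurable (Y i)) (hindep : iIndepFun Y P) (hh : 0 ≤ h)
    (hfin : ∀ j, ∫⁻ ω, ENNReal.ofReal (Real.exp (h * Y j ω)) ∂P ≠ ∞) (u : ℝ) (N : ℕ) :
    ∑ k ∈ range N, P (disjointed (fun k => {ω | u < ∑ j ∈ range (k + 1), Y j ω}) k) ≤
      ENNReal.ofReal (Real.exp (-h * u)) *
        ⨆ k, ∫⁻ ω, ENNReal.ofReal (Real.exp (h * ∑ j ∈ range (k + 1), Y j ω)) ∂P := by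
  set C := disjointed (fun k => {ω | u < ∑ j ∈ range (k + 1), Y j ω})
  set A := ⨆ k, ∫⁻ ω, ENNReal.ofReal (Real.exp (h * ∑ j ∈ range (k + 1), Y j ω)) ∂P
  set a := ∫⁻ ω, ENNReal.ofReal (Real.exp (h * ∑ j ∈ range N, Y j ω)) ∂P
  have hC k : MeasurableSet (C k) :=
    iSup₂_le (fun i _ => (hmeas i).comap_le) _ (measurableSet_disjointed_lt_sum_range u k)
  have ha0 : a ≠ 0 := lintegral_ofReal_exp_ne_zero (by fun_prop)
  have haTop : a ≠ ∞ := (lintegral_ofReal_exp_mul_sum hmeas hindep (range N)).trans_ne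
    (ENNReal.prod_ne_top fun j _ => hfin j)
  have hterm : ∀ k ∈ range N, ENNReal.ofReal (Real.exp (h * u)) * P (C k) * a ≤
      A * ∫⁻ ω in C k, ENNReal.ofReal (Real.exp (h * ∑ j ∈ range N, Y j ω)) ∂P := fun k hk =>
    (ofReal_exp_mul_measure_mul_lintegral_le hmeas hindep hh (mem_range.1 hk)
      (measurableSet_disjointed_lt_sum_range u k) (disjointed_subset _ k)).trans <|
      by gcongr; exact le_iSup (α := ℝ≥0∞) (fun k => _) k
  have htotal : ∑ k ∈ range N,
      ∫⁻ ω in C k, ENNReal.ofReal (Real.exp (h * ∑ j ∈ range N, Y j ω)) ∂P ≤ a := by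
    rw [← lintegral_biUnion_finset ((disjoint_disjointed _).set_pairwise _) fun k _ => hC k]
    exact setLIntegral_le_lintegral _ _
  have hmul : ENNReal.ofReal (Real.exp (h * u)) * (∑ k ∈ range N, P (C k)) * a ≤ A * a :=
    calc _ = ∑ k ∈ range N, ENNReal.ofReal (Real.exp (h * u)) * P (C k) * a := by
          rw [mul_sum, sum_mul]
      _ ≤ ∑ k ∈ range N, A * ∫⁻ ω in C k, ENNReal.ofReal (Real.exp (h * ∑ j ∈ range N, Y j ω)) ∂P :=
          sum_le_sum hterm
      _ ≤ A * a := by rw [← mul_sum]; gcongr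
  rw [ENNReal.mul_le_mul_iff_left ha0 haTop] at hmul
  rw [neg_mul, Real.exp_neg, ENNReal.ofReal_inv_of_pos (Real.exp_pos _)]
  exact (ENNReal.mul_le_iff_le_inv (by positivity) ENNReal.ofReal_ne_top).1 hmul

theorem measure_iUnion_lt_sum_range_le [IsProbabilityMeasure P]
    (hmeas : ∀ i, Measurable (Y i)) (hindep : iIndepFun Y P) (hh : 0 ≤ h)
    (hfin : ∀ j, ∫⁻ ω, ENNReal.ofReal (Real.exp (h * Y j ω)) ∂P ≠ ∞) (u : ℝ) :
    P (⋃ k, {ω | u < ∑ j ∈ range (k + 1), Y j ω}) ≤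
      ENNReal.ofReal (Real.exp (-h * u)) *
        ⨆ k, ∫⁻ ω, ENNReal.ofReal (Real.exp (h * ∑ j ∈ range (k + 1), Y j ω)) ∂P := by
  rw [← iUnion_disjointed, measure_iUnion (disjoint_disjointed _) fun k =>
    iSup₂_le (fun i _ => (hmeas i).comap_le) _ (measurableSet_disjointed_lt_sum_range u k),
    ENNReal.tsum_eq_iSup_nat]
  exact iSup_le (sum_measure_disjointed_lt_sum_range_le hmeas hindep hh hfin u)

end Maximal

/-- Corollary 3, periodic model.
`Y j` stands for `Y_{j+1}` and `S k = Y_1 + ⋯ + Y_k = ∑_{j < k} Y j`.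
Suppose `l ≥ 1` and `Y_{n+l}` is identically distributed with `Y_n` for all `n ≥ 1`.
If `h ≥ 0` satisfies `E[e^{h S_l}] ≤ 1`, then
`sup_{k≥1} E[e^{h S_k}] = max_{1≤k≤l} E[e^{h S_k}]`, and for every `u > 0`:
`P[sup_{k≥1} S_k > u] ≤ e^{-h u} · max_{1≤k≤l} E[e^{h S_k}]`. -/
theorem stmt5 {Ω : Type*} [MeasurableSpace Ω] (P : Measure Ω) [IsProbabilityMeasure P]
    (Y : ℕ → Ω → ℝ)
    (hmeas : ∀ i, Measurable (Y i))
    (hindep : iIndepFun Y P)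
    (S : ℕ → Ω → ℝ) (hS : ∀ k ω, S k ω = ∑ j ∈ Finset.range k, Y j ω)
    (l : ℕ) (hl : 1 ≤ l)
    (hper : ∀ n : ℕ, Measure.map (Y (n + l)) P = Measure.map (Y n) P)
    (h : ℝ) (hh : 0 ≤ h)
    (hSl : ∫⁻ ω, ENNReal.ofReal (Real.exp (h * S l ω)) ∂P ≤ 1) :
    (⨆ k : ℕ, ∫⁻ ω, ENNReal.ofReal (Real.exp (h * S (k + 1) ω)) ∂P) =
      (⨆ k ∈ Finset.Icc 1 l, ∫⁻ ω, ENNReal.ofReal (Real.exp (h * S k ω)) ∂P) ∧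
    ∀ u : ℝ, 0 < u →
      P (⋃ k : ℕ, {ω | u < S (k + 1) ω}) ≤
        ENNReal.ofReal (Real.exp (-h * u)) *
          ⨆ k ∈ Finset.Icc 1 l, ∫⁻ ω, ENNReal.ofReal (Real.exp (h * S k ω)) ∂P := by
  obtain rfl : S = fun k ω => ∑ j ∈ range k, Y j ω := funext fun k => funext (hS k)
  set f : ℕ → ℝ≥0∞ := fun j => ∫⁻ ω, ENNReal.ofReal (Real.exp (h * Y j ω)) ∂P
  have hmoment (k : ℕ) : ∫⁻ ω, ENNReal.ofReal (Real.exp (h * ∑ j ∈ range k, Y j ω)) ∂P =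
      ∏ j ∈ range k, f j :=
    lintegral_ofReal_exp_mul_sum hmeas hindep _
  have hφ : Measurable fun x : ℝ => ENNReal.ofReal (Real.exp (h * x)) := by fun_prop
  have hf : Function.Periodic f l := fun n =>
    (lintegral_map hφ (hmeas _)).symm.trans (by rw [hper, lintegral_map hφ (hmeas _)])
  have hprod : ∏ j ∈ range l, f j ≤ 1 := hmoment l ▸ hSl
  have hshift (k : ℕ) : ∫⁻ ω, ENNReal.ofReal (Real.exp (h * ∑ j ∈ range (k + l), Y j ω)) ∂P ≤
      ∫⁻ ω, ENNReal.ofReal (Real.exp (h * ∑ j ∈ range k, Y j ω)) ∂P := by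
    rw [hmoment, hmoment, hf.prod_range_add]
    exact mul_le_of_le_one_right' hprod
  have hfin : ∀ j, f j ≠ ∞ := hf.ne_top_of_prod_range_ne_top hl
    (fun j => lintegral_ofReal_exp_ne_zero (by fun_prop))
    (ne_top_of_le_ne_top ENNReal.one_ne_top hprod)
  have hsup := iSup_add_one_eq_iSup_Icc_of_add_le
    (a := fun k => ∫⁻ ω, ENNReal.ofReal (Real.exp (h * ∑ j ∈ range k, Y j ω)) ∂P) hl hshift
  exact ⟨hsup, fun u _ => hsup ▸ measure_iUnion_lt_sum_range_le hmeas hindep hh hfin u⟩
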